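/- (Monotonicity of the coupled competition processes.) Fix two distinct sources s₁, s₂ ∈ ℤ^d and a configuration ω ∈ Ω. Then for every t ∈ ℕ: (i) if p ≤ p' and q' ≤ q, then η¹_{p,q}(t) ⊆ η¹_{p',q'}(t); (ii) if q ≤ q' and p' ≤ p, then η²_{p,q}(t) ⊆ η²_{p',q'}(t). In words, the set of sites reached by the first infection is non-decreasing in its own parameter p and non-increasing in the competitor's parameter q, and symmetrically for the second infection. -/

import Mathlib

open MeasureTheory Filter ProbabilityTheory

noncomputable section

namespace BernoulliCompetition

attribute [local instance] Classical.propDecidable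

/-- Vertices of the lattice `ℤ^d`. -/
abbrev V (d : ℕ) := Fin d → ℤ

/-- Canonical embedding of `ℤ^d` into `ℝ^d`. -/
def toR {d : ℕ} (x : V d) : Fin d → ℝ := fun i => (x i : ℝ)

/-- The `ℓ¹` norm of a point of `ℤ^d` (an integer-valued quantity). -/
def norm1 {d : ℕ} (x : V d) : ℕ := ∑ i, (x i).natAbs

/-- The environment: a value in `[0,1]` attached to every unordered pair of vertices
(only the values on nearest-neighbour pairs, i.e. genuine edges of `𝕃^d`, are ever used). -/
abbrev Config (d : ℕ) := Sym2 (V d) → ℝ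

/-- The uniform law on `[0,1]`. -/
def unif : Measure ℝ := volume.restrict (Set.Icc 0 1)

/-- `P` is the product over the edges of the uniform laws on `[0,1]`:
it is a probability measure whose coordinates are i.i.d. uniform on `[0,1]`. -/
def IsBernoulliEnv {d : ℕ} (P : Measure (Config d)) : Prop :=
  IsProbabilityMeasure P ∧
  iIndepFun (fun e (ω : Config d) => ω e) P ∧
  ∀ e : Sym2 (V d), P.map (fun ω => ω e) = unif

/-- `{x, y}` is an edge of the lattice `𝕃^d` and it is `p`-open in the configuration `ω`. -/
def pOpen {d : ℕ} (ω : Config d) (p : ℝ) (x y : V d) : Prop :=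
  norm1 (x - y) = 1 ∧ ω s(x, y) ≤ p

/-- The `p`-open boundary `∂_p A (ω)` of a set of vertices. -/
def bdry {d : ℕ} (ω : Config d) (p : ℝ) (A : Set (V d)) : Set (V d) :=
  {y | y ∉ A ∧ ∃ x ∈ A, pOpen ω p x y}

/-- The two-type competition process with parameters `(p, q)` and sources `(s₁, s₂)`. -/
def comp {d : ℕ} (ω : Config d) (p q : ℝ) (s₁ s₂ : V d) : ℕ → Set (V d) × Set (V d)
  | 0 => ({s₁}, {s₂})
  | t + 1 =>
    let η := comp ω p q s₁ s₂ t
    (η.1 ∪ (bdry ω p η.1 \ η.2), η.2 ∪ (bdry ω q η.2 \ η.1))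

/-- Sites occupied by the first (weak, parameter `p`) infection at time `t`. -/
def eta1 {d : ℕ} (ω : Config d) (p q : ℝ) (s₁ s₂ : V d) (t : ℕ) : Set (V d) :=
  (comp ω p q s₁ s₂ t).1

/-- Sites occupied by the second (strong, parameter `q`) infection at time `t`. -/
def eta2 {d : ℕ} (ω : Config d) (p q : ℝ) (s₁ s₂ : V d) (t : ℕ) : Set (V d) :=
  (comp ω p q s₁ s₂ t).2

/-- The event `𝒢¹_{p,q}` that the first infection grows unboundedly. -/
def G1 {d : ℕ} (p q : ℝ) (s₁ s₂ : V d) : Set (Config d) :=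
  {ω | (⋃ t : ℕ, eta1 ω p q s₁ s₂ t).Infinite}

/-- The event `𝒢²_{p,q}` that the second infection grows unboundedly. -/
def G2 {d : ℕ} (p q : ℝ) (s₁ s₂ : V d) : Set (Config d) :=
  {ω | (⋃ t : ℕ, eta2 ω p q s₁ s₂ t).Infinite}

/-- `γ` is a `p`-open path of length `m` from `x` to `y`. -/
def IsPathFrom {d : ℕ} (ω : Config d) (p : ℝ) (x y : V d) (γ : ℕ → V d) (m : ℕ) : Prop :=
  γ 0 = x ∧ γ m = y ∧ ∀ i < m, pOpen ω p (γ i) (γ (i + 1))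

/-- The chemical distance `D_p(x,y) ∈ ℕ ∪ {∞}`: minimal length of a `p`-open path. -/
def chemDist {d : ℕ} (ω : Config d) (p : ℝ) (x y : V d) : ℕ∞ :=
  sInf {n : ℕ∞ | ∃ m : ℕ, n = (m : ℕ∞) ∧ ∃ γ : ℕ → V d, IsPathFrom ω p x y γ m}

/-- The event `x ↔_p y` that `x` and `y` are connected in `𝒢_p(ω)`. -/
def Connected {d : ℕ} (ω : Config d) (p : ℝ) (x y : V d) : Prop :=
  chemDist ω p x y ≠ ⊤

/-- The `p`-open cluster `C_p^x` of the vertex `x`. -/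
def cluster {d : ℕ} (ω : Config d) (p : ℝ) (x : V d) : Set (V d) :=
  {y | Connected ω p x y}

/-- The union `C_p^∞` of the infinite `p`-open clusters. -/
def Cinf {d : ℕ} (ω : Config d) (p : ℝ) : Set (V d) :=
  {x | (cluster ω p x).Infinite}

/-- The event that `𝒢_p(ω)` has an infinite connected component. -/
def percolates {d : ℕ} (p : ℝ) : Set (Config d) :=
  {ω | ∃ x : V d, (cluster ω p x).Infinite}

/-- The critical probability `p_c(d)`. -/
def pc (d : ℕ) (P : Measure (Config d)) : ℝ :=
  sSup {p : ℝ | 0 ≤ p ∧ p ≤ 1 ∧ P (percolates p) = 0}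

/-- An oriented step: one coordinate increases by `1`, the others are unchanged. -/
def OrStep {d : ℕ} (x y : V d) : Prop :=
  ∃ i, y i = x i + 1 ∧ ∀ j, j ≠ i → y j = x j

/-- `y` can be reached from `x` by a `p`-open oriented path. -/
def OrConnected {d : ℕ} (ω : Config d) (p : ℝ) (x y : V d) : Prop :=
  ∃ (m : ℕ) (γ : ℕ → V d), γ 0 = x ∧ γ m = y ∧
    ∀ i < m, OrStep (γ i) (γ (i + 1)) ∧ pOpen ω p (γ i) (γ (i + 1))

/-- The event that there is an infinite oriented `p`-open cluster. -/
def orPercolates {d : ℕ} (p : ℝ) : Set (Config d) :=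
  {ω | ∃ x : V d, {y | OrConnected ω p x y}.Infinite}

/-- The oriented critical probability `p_c^→(d)`. -/
def pcOr (d : ℕ) (P : Measure (Config d)) : ℝ :=
  sSup {p : ℝ | 0 ≤ p ∧ p ≤ 1 ∧ P (orPercolates p) = 0}

/-- `ν` is a norm on `ℝ^d`. -/
structure IsNorm (d : ℕ) (ν : (Fin d → ℝ) → ℝ) : Prop where
  nonneg : ∀ x, 0 ≤ ν x
  eq_zero_iff : ∀ x, ν x = 0 ↔ x = 0
  smul : ∀ (c : ℝ) (x), ν (c • x) = |c| * ν x
  triangle : ∀ x y, ν (x + y) ≤ ν x + ν y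

/-- The renormalized fluctuation `1_{a ↔_p x} (D_p(a,x)/ν(x-a) - 1)` of the chemical
distance with respect to the candidate norm `ν`. -/
def fluct {d : ℕ} (ω : Config d) (p : ℝ) (ν : (Fin d → ℝ) → ℝ) (a x : V d) : ℝ :=
  if Connected ω p a x then ((chemDist ω p a x).toNat : ℝ) / ν (toR (x - a)) - 1 else 0

/-- The norm `ν` governs the asymptotic behaviour of the chemical distance `D_p`:
`P`-a.s., `limsup_{‖x‖₁ → ∞} 1_{0 ↔_p x} (D_p(0,x)/ν(x) − 1) = 0`. -/
def Governs {d : ℕ} (P : Measure (Config d)) (p : ℝ) (ν : (Fin d → ℝ) → ℝ) : Prop :=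
  IsNorm d ν ∧
  ∀ᵐ ω ∂P, Filter.limsup (fun x : V d => fluct ω p ν 0 x) Filter.cofinite = 0

/-- The unit sphere of the norm `ν`. -/
def sphere {d : ℕ} (ν : (Fin d → ℝ) → ℝ) : Set (Fin d → ℝ) := {u | ν u = 1}

/-- The direction `x̂ = x / ν(x)` of a point. -/
def hat {d : ℕ} (ν : (Fin d → ℝ) → ℝ) (x : Fin d → ℝ) : Fin d → ℝ := (ν x)⁻¹ • x

/-- The shell of lattice points with direction in `A` and `ν`-radius between `r` and `R`. -/
def Shell {d : ℕ} (ν : (Fin d → ℝ) → ℝ) (A : Set (Fin d → ℝ)) (r R : ℝ) : Set (V d) :=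
  {x | x ≠ 0 ∧ hat ν (toR x) ∈ A ∧ r ≤ ν (toR x) ∧ ν (toR x) ≤ R}

/-- The shell with no upper bound on the radius, `Shell(A, r, ∞)`. -/
def ShellU {d : ℕ} (ν : (Fin d → ℝ) → ℝ) (A : Set (Fin d → ℝ)) (r : ℝ) : Set (V d) :=
  {x | x ≠ 0 ∧ hat ν (toR x) ∈ A ∧ r ≤ ν (toR x)}

/-- The `φ`-enlargement `A ⊕ φ` of a subset `A` of the unit sphere of `ν`. -/
def enlarge {d : ℕ} (ν : (Fin d → ℝ) → ℝ) (A : Set (Fin d → ℝ)) (φ : ℝ) :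
    Set (Fin d → ℝ) :=
  {u | ν u = 1 ∧ ∃ a ∈ A, ν (u - a) ≤ φ}

/-- The one-type growth process `B^s_p(t)`. -/
def Bgrow {d : ℕ} (ω : Config d) (p : ℝ) (s : V d) : ℕ → Set (V d)
  | 0 => {s}
  | t + 1 => Bgrow ω p s t ∪ bdry ω p (Bgrow ω p s t)


lemma coupled_aux {d : ℕ} (ω : Config d) (s₁ s₂ : V d) (t : ℕ)
    (p p' q q' : ℝ) (hp : p ≤ p') (hq : q' ≤ q) :
    eta1 ω p q s₁ s₂ t ⊆ eta1 ω p' q' s₁ s₂ t ∧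
    eta2 ω p' q' s₁ s₂ t ⊆ eta2 ω p q s₁ s₂ t := by
  induction t with
  | zero => exact ⟨subset_rfl, subset_rfl⟩
  | succ t ih =>
    obtain ⟨h1, h2⟩ := ih
    constructor
    · rintro y (hy | ⟨⟨hny, x, hx, hedge, hwle⟩, hy2⟩)
      · exact Or.inl (h1 hy)
      · by_cases hne : y ∈ eta1 ω p' q' s₁ s₂ t
        · exact Or.inl hne
        · exact Or.inr ⟨⟨hne, x, h1 hx, hedge, hwle.trans hp⟩, fun h => hy2 (h2 h)⟩
    · rintro y (hy | ⟨⟨hny, x, hx, hedge, hwle⟩, hy2⟩)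
      · exact Or.inl (h2 hy)
      · by_cases hne : y ∈ eta2 ω p q s₁ s₂ t
        · exact Or.inl hne
        · exact Or.inr ⟨⟨hne, x, h2 hx, hedge, hwle.trans hq⟩, fun h => hy2 (h1 h)⟩

/-- **Monotonicity of the coupled competition processes.** For a fixed configuration `ω`,
`η¹_{p,q}(t)` is non-decreasing in `p` and non-increasing in `q`, and `η²_{p,q}(t)` is
non-decreasing in `q` and non-increasing in `p`. -/
theorem coupled_monotonicity
    {d : ℕ} (ω : Config d) (s₁ s₂ : V d) (hs : s₁ ≠ s₂) (t : ℕ) :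
    (∀ p p' q q' : ℝ, p ≤ p' → q' ≤ q →
      eta1 ω p q s₁ s₂ t ⊆ eta1 ω p' q' s₁ s₂ t) ∧
    (∀ p p' q q' : ℝ, q ≤ q' → p' ≤ p →
      eta2 ω p q s₁ s₂ t ⊆ eta2 ω p' q' s₁ s₂ t) := by
  constructor
  · intro p p' q q' hp hq
    exact (coupled_aux ω s₁ s₂ t p p' q q' hp hq).1
  · intro p p' q q' hq hp
    exact (coupled_aux ω s₁ s₂ t p' p q' q hp hq).2

end BernoulliCompetition
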